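/- arXiv:1809.02050 — 2 statements merged into one kernel-verified Lean document; each statement's English description precedes it below -/
import Mathlib

section
/- Let Z and Y be random vectors in ℝ^d with d̃_{W_r}(Z,Y) < 1 for some r ≥ 2. Then d̃_{W_{r−1}}(Z,Y) ≤ C̃_r · sqrt(d̃_{W_r}(Z,Y)) for some constant C̃_r > 0 depending only on r and d. Consequently, by induction, if d̃_{W_2}(Z,Y) < 1 then d̃_{W_1}(Z,Y) ≤ C̄_r · (d̃_{W_r}(Z,Y))^{1/2^{r−1}}. -/
/-!
Mollify a test function `h` of order `k` at scale `ε`. The mollification keeps every derivative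
of order `≤ k` bounded by one; its derivatives of order `k + 1` are `O(1/ε)`, since the last
derivative can be moved onto the kernel; and it is `O(ε)`-close to `h`, since `h` is Lipschitz.
Testing against the rescaled mollification gives
`dtW_k ≤ O(ε) + (1 + O(1/ε)) dtW_{k+1}`, and the bandwidth `ε = √dtW_{k+1}` yields
`dtW_k ≤ C √dtW_{k+1}`. Iterating this from `k = 1` to `k = r - 1` gives the exponent `1/2^(r-1)`.
-/

open MeasureTheory

/-- The modified smooth Wasserstein distance `d̃_{W_r}`: the supremum over `r`-times continuously
differentiable test functions `h` with all partial derivatives of order `0 ≤ |α| ≤ r` bounded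
by one, of `|E h(Z) - E h(Y)|`. -/
noncomputable def dtW (d r : ℕ) (μZ μY : Measure (EuclideanSpace ℝ (Fin d))) : ℝ :=
  sSup {c : ℝ | ∃ h : EuclideanSpace ℝ (Fin d) → ℝ,
    ContDiff ℝ r h ∧
    (∀ ℓ : ℕ, ℓ ≤ r → ∀ x, ∀ m : Fin ℓ → Fin d,
      |iteratedFDeriv ℝ ℓ h x (fun i => EuclideanSpace.single (m i) 1)| ≤ 1) ∧
    c = |∫ x, h x ∂μZ - ∫ y, h y ∂μY|}

open ContinuousLinearMap
open scoped Convolution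

section Mollify

variable {E F G : Type*} [NormedAddCommGroup E] [NormedSpace ℝ E]
  [NormedAddCommGroup F] [NormedSpace ℝ F] [NormedAddCommGroup G] [NormedSpace ℝ G]

lemma norm_precompL_lsmul_apply_le (u : E →L[ℝ] ℝ) (v : F) :
    ‖precompL E (lsmul ℝ ℝ) u v‖ ≤ ‖u‖ * ‖v‖ := by
  have : precompL E (lsmul ℝ ℝ) u v = u.smulRight v := by ext; simp
  rw [this, norm_smulRight_apply]

variable [FiniteDimensional ℝ E] [MeasureSpace E]

noncomputable def mollify (φ : ContDiffBump (0 : E)) (ε : ℝ) (f : E → F) (x : E) : F :=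
  ∫ y, φ.normed volume y • f (x - ε • y)

noncomputable def ContDiffBump.normFDerivIntegral (φ : ContDiffBump (0 : E)) : ℝ :=
  ∫ y, ‖fderiv ℝ (φ.normed volume) y‖

variable {φ : ContDiffBump (0 : E)} {ε : ℝ} {f : E → F}

lemma ContDiffBump.normFDerivIntegral_nonneg : 0 ≤ φ.normFDerivIntegral :=
  integral_nonneg fun _ => norm_nonneg _

lemma mollify_eq_convolution_comp_smul (hε : ε ≠ 0) (f : E → F) :
    mollify φ ε f
      = fun x => (φ.normed volume ⋆[lsmul ℝ ℝ] fun z => f (ε • z)) (ε⁻¹ • x) := by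
  funext x
  simp [mollify, convolution_def, smul_sub, smul_inv_smul₀ hε]

lemma mollify_comp_linearIsometryEquiv [CompleteSpace F] [CompleteSpace G] (L : F ≃ₗᵢ[ℝ] G)
    (ε : ℝ) (f : E → F) :
    mollify φ ε (L ∘ f) = L ∘ mollify φ ε f := by
  funext x
  simp only [mollify, Function.comp_apply, ← L.map_smul]
  exact L.toLinearIsometry.integral_comp_comm _

variable [BorelSpace E] [(volume : Measure E).IsAddHaarMeasure]

lemma integrable_normed_smul_comp_sub (φ : ContDiffBump (0 : E)) (hf : Continuous f) (ε : ℝ)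
    (x : E) :
    Integrable (fun y => φ.normed volume y • f (x - ε • y)) :=
  (φ.continuous_normed.smul (by fun_prop)).integrable_of_hasCompactSupport
    φ.hasCompactSupport_normed.smul_right

lemma norm_mollify_le {B : ℝ} (hB : ∀ z, ‖f z‖ ≤ B) (ε : ℝ) (x : E) :
    ‖mollify φ ε f x‖ ≤ B :=
  calc ‖mollify φ ε f x‖ ≤ ∫ y, φ.normed volume y * B := by
        refine norm_integral_le_of_norm_le (φ.integrable_normed.mul_const B)
          (.of_forall fun y => ?_)
        rw [norm_smul, Real.norm_of_nonneg (φ.nonneg_normed y)]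
        exact mul_le_mul_of_nonneg_left (hB _) (φ.nonneg_normed y)
    _ = B := by rw [integral_mul_const, φ.integral_normed, one_mul]

lemma contDiff_mollify (hf : Continuous f) (hε : ε ≠ 0) {n : ℕ∞} :
    ContDiff ℝ n (mollify φ ε f) := by
  rw [mollify_eq_convolution_comp_smul hε]
  exact (φ.hasCompactSupport_normed.contDiff_convolution_left _ φ.contDiff_normed
    (hf.comp (continuous_const_smul ε)).locallyIntegrable).comp (contDiff_const_smul _)

lemma norm_fderiv_mollify_le (hf : Continuous f) {B : ℝ} (hB : ∀ z, ‖f z‖ ≤ B)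
    (hε : 0 < ε) (x : E) : ‖fderiv ℝ (mollify φ ε f) x‖ ≤ φ.normFDerivIntegral * B / ε := by
  set H : E → F := fun z => f (ε • z)
  set D := (fderiv ℝ (φ.normed volume) ⋆[precompL E (lsmul ℝ ℝ)] H) (ε⁻¹ • x)
  have hD : HasFDerivAt (mollify φ ε f) (D.comp (ε⁻¹ • ContinuousLinearMap.id ℝ E)) x := by
    rw [mollify_eq_convolution_comp_smul hε.ne']
    exact (φ.hasCompactSupport_normed.hasFDerivAt_convolution_left _ φ.contDiff_normed
      (hf.comp (continuous_const_smul ε)).locallyIntegrable _).comp x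
      ((hasFDerivAt_id x).const_smul ε⁻¹)
  have hDnorm : ‖D‖ ≤ φ.normFDerivIntegral * B := by
    rw [ContDiffBump.normFDerivIntegral, ← integral_mul_const]
    refine norm_integral_le_of_norm_le ?_ (.of_forall fun t => ?_)
    · have hcont := (φ.contDiff_normed (μ := volume) (n := 1)).continuous_fderiv one_ne_zero
      exact (hcont.norm.integrable_of_hasCompactSupport
        (φ.hasCompactSupport_normed.fderiv ℝ).norm).mul_const B
    · exact (norm_precompL_lsmul_apply_le _ _).trans
        (mul_le_mul_of_nonneg_left (hB _) (norm_nonneg _))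
  rw [hD.fderiv, div_eq_mul_inv]
  refine (opNorm_comp_le _ _).trans (mul_le_mul hDnorm ?_ (norm_nonneg _)
    (mul_nonneg ContDiffBump.normFDerivIntegral_nonneg ((norm_nonneg _).trans (hB x))))
  refine (opNorm_smul_le _ _).trans ?_
  rw [Real.norm_of_nonneg (inv_nonneg.2 hε.le)]
  exact mul_le_of_le_one_right (inv_nonneg.2 hε.le) norm_id_le

lemma mollify_apply_apply {ι : Type*} [Fintype ι] {M : ι → Type*}
    [∀ i, NormedAddCommGroup (M i)] [∀ i, NormedSpace ℝ (M i)]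
    {f : E → ContinuousMultilinearMap ℝ M F} (hf : Continuous f) (ε : ℝ) (x : E)
    (v : ∀ i, M i) :
    mollify φ ε f x v = mollify φ ε (fun z => f z v) x :=
  ContinuousMultilinearMap.integral_apply (integrable_normed_smul_comp_sub φ hf ε x) v

lemma hasFDerivAt_mollify (hf : ContDiff ℝ 1 f) {C : ℝ} (hC : ∀ z, ‖fderiv ℝ f z‖ ≤ C)
    (ε : ℝ) (x : E) : HasFDerivAt (mollify φ ε f) (mollify φ ε (fderiv ℝ f) x) x := by
  refine hasFDerivAt_integral_of_dominated_of_fderiv_le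
    (F' := fun x' y => φ.normed volume y • fderiv ℝ f (x' - ε • y))
    (bound := fun y => φ.normed volume y * C) Filter.univ_mem
    (.of_forall fun x' => (integrable_normed_smul_comp_sub φ hf.continuous ε x').1)
    (integrable_normed_smul_comp_sub φ hf.continuous ε x)
    (integrable_normed_smul_comp_sub φ (hf.continuous_fderiv one_ne_zero) ε x).1
    (.of_forall fun y _ _ => ?_) (φ.integrable_normed.mul_const C)
    (.of_forall fun y x' _ => ?_)
  · rw [norm_smul, Real.norm_of_nonneg (φ.nonneg_normed y)]
    exact mul_le_mul_of_nonneg_left (hC _) (φ.nonneg_normed y)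
  · have := (hf.differentiable one_ne_zero (x' - ε • y)).hasFDerivAt.comp x'
      ((hasFDerivAt_id x').sub_const (ε • y))
    have htranslate : HasFDerivAt (fun z => f (z - ε • y)) (fderiv ℝ f (x' - ε • y)) x' := by
      simpa [Function.comp_def] using this
    exact htranslate.const_smul _

variable [CompleteSpace F]

lemma iteratedFDeriv_mollify {k : ℕ} (hf : ContDiff ℝ k f)
    (hb : ∀ j ≤ k, ∃ C, ∀ z, ‖iteratedFDeriv ℝ j f z‖ ≤ C) (ε : ℝ) {j : ℕ} (hj : j ≤ k) :
    iteratedFDeriv ℝ j (mollify φ ε f) = mollify φ ε (iteratedFDeriv ℝ j f) := by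
  induction j with
  | zero => rw [iteratedFDeriv_zero_eq_comp, iteratedFDeriv_zero_eq_comp,
      mollify_comp_linearIsometryEquiv]
  | succ j ih =>
    obtain ⟨C, hC⟩ := hb (j + 1) hj
    have hfj : ContDiff ℝ 1 (iteratedFDeriv ℝ j f) :=
      hf.iteratedFDeriv_right (by norm_cast; omega)
    have hderiv : fderiv ℝ (mollify φ ε (iteratedFDeriv ℝ j f))
        = mollify φ ε (fderiv ℝ (iteratedFDeriv ℝ j f)) := funext fun x =>
      (hasFDerivAt_mollify hfj (fun z => norm_fderiv_iteratedFDeriv.trans_le (hC z)) ε x).fderiv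
    rw [iteratedFDeriv_succ_eq_comp_left, iteratedFDeriv_succ_eq_comp_left, ih (by omega),
      hderiv]
    exact (mollify_comp_linearIsometryEquiv (E := E) (F := E →L[ℝ] E [×j]→L[ℝ] F)
      (G := E [×(j + 1)]→L[ℝ] F)
      (continuousMultilinearCurryLeftEquiv ℝ (fun _ : Fin (j + 1) => E) F).symm ε _).symm

lemma norm_mollify_sub_le {K : NNReal} (hf : LipschitzWith K f) (hε : 0 < ε) (x : E) :
    ‖mollify φ ε f x - f x‖ ≤ K * φ.rOut * ε := by
  rw [← dist_eq_norm, mollify_eq_convolution_comp_smul hε.ne']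
  have hx : f x = f (ε • ε⁻¹ • x) := by rw [smul_inv_smul₀ hε.ne']
  rw [hx]
  refine φ.dist_normed_convolution_le
    (hf.continuous.comp (continuous_const_smul ε)).aestronglyMeasurable fun z hz => ?_
  calc dist (f (ε • z)) (f (ε • ε⁻¹ • x)) ≤ K * dist (ε • z) (ε • ε⁻¹ • x) :=
        hf.dist_le_mul _ _
    _ = K * (ε * dist z (ε⁻¹ • x)) := by rw [dist_smul₀, Real.norm_of_nonneg hε.le]
    _ ≤ K * φ.rOut * ε := by
      rw [mul_assoc, mul_comm φ.rOut]
      gcongr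
      exact (Metric.mem_ball.1 hz).le

end Mollify

section SmoothWasserstein

variable {d : ℕ}

lemma ContinuousMultilinearMap.norm_le_of_abs_apply_single_le {n : ℕ}
    (T : ContinuousMultilinearMap ℝ (fun _ : Fin n => EuclideanSpace ℝ (Fin d)) ℝ)
    (hT : ∀ m : Fin n → Fin d, |T (fun i => EuclideanSpace.single (m i) 1)| ≤ 1) :
    ‖T‖ ≤ (d : ℝ) ^ n := by
  refine T.opNorm_le_bound (by positivity) fun v => ?_
  have hv : T v = ∑ m : Fin n → Fin d,
      (∏ i, v i (m i)) • T (fun i => EuclideanSpace.single (m i) 1) := by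
    have hsum : v = fun i => ∑ j, v i j • EuclideanSpace.single j (1 : ℝ) :=
      funext fun i => by simpa using ((EuclideanSpace.basisFun (Fin d) ℝ).sum_repr (v i)).symm
    conv_lhs => rw [hsum]
    rw [T.map_sum]
    simp_rw [T.map_smul_univ]
  calc ‖T v‖ ≤ ∑ _m : Fin n → Fin d, ∏ i, ‖v i‖ := by
        rw [hv]
        refine (norm_sum_le _ _).trans (Finset.sum_le_sum fun m _ => ?_)
        rw [norm_smul, norm_prod]
        exact mul_le_of_le_one_right (by positivity) (hT m) |>.trans
          (Finset.prod_le_prod (fun _ _ => norm_nonneg _) fun i _ => PiLp.norm_apply_le _ _)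
    _ = (d : ℝ) ^ n * ∏ i, ‖v i‖ := by simp

/-- The class `H̃_r` of test functions in the definition of `dtW`. -/
structure IsTestFn (d r : ℕ) (h : EuclideanSpace ℝ (Fin d) → ℝ) : Prop where
  contDiff : ContDiff ℝ r h
  abs_iteratedFDeriv_single_le : ∀ ℓ : ℕ, ℓ ≤ r → ∀ x, ∀ m : Fin ℓ → Fin d,
    |iteratedFDeriv ℝ ℓ h x (fun i => EuclideanSpace.single (m i) 1)| ≤ 1

namespace IsTestFn

variable {r : ℕ} {h : EuclideanSpace ℝ (Fin d) → ℝ}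

lemma zero : IsTestFn d r (0 : EuclideanSpace ℝ (Fin d) → ℝ) :=
  ⟨contDiff_const, fun ℓ _ x m => by simp⟩

lemma mono {m : ℕ} (hh : IsTestFn d r h) (hm : m ≤ r) : IsTestFn d m h :=
  ⟨hh.contDiff.of_le (by exact_mod_cast hm), fun ℓ hℓ =>
    hh.abs_iteratedFDeriv_single_le ℓ (hℓ.trans hm)⟩

lemma abs_le_one (hh : IsTestFn d r h) (x : EuclideanSpace ℝ (Fin d)) : |h x| ≤ 1 := by
  simpa using hh.abs_iteratedFDeriv_single_le 0 (Nat.zero_le r) x Fin.elim0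

lemma integrable (hh : IsTestFn d r h) (μ : Measure (EuclideanSpace ℝ (Fin d)))
    [IsFiniteMeasure μ] : Integrable h μ :=
  .of_bound hh.contDiff.continuous.aestronglyMeasurable 1
    (.of_forall fun x => (Real.norm_eq_abs _).trans_le (hh.abs_le_one x))

lemma abs_integral_le (hh : IsTestFn d r h) (μ : Measure (EuclideanSpace ℝ (Fin d)))
    [IsProbabilityMeasure μ] : |∫ x, h x ∂μ| ≤ 1 := by
  simpa using norm_integral_le_of_norm_le_const (μ := μ)
    (.of_forall fun x => (Real.norm_eq_abs _).trans_le (hh.abs_le_one x))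

lemma norm_iteratedFDeriv_le (hh : IsTestFn d r h) {ℓ : ℕ} (hℓ : ℓ ≤ r)
    (x : EuclideanSpace ℝ (Fin d)) : ‖iteratedFDeriv ℝ ℓ h x‖ ≤ (d : ℝ) ^ ℓ :=
  ContinuousMultilinearMap.norm_le_of_abs_apply_single_le _
    (hh.abs_iteratedFDeriv_single_le ℓ hℓ x)

lemma lipschitzWith (hh : IsTestFn d r h) (hr : 1 ≤ r) : LipschitzWith d h := by
  refine lipschitzWith_of_nnnorm_fderiv_le (hh.contDiff.differentiable (by norm_cast; omega))
    fun x => ?_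
  rw [← NNReal.coe_le_coe, coe_nnnorm, ← norm_iteratedFDeriv_one, NNReal.coe_natCast]
  simpa using hh.norm_iteratedFDeriv_le hr x

end IsTestFn

variable {μ ν : Measure (EuclideanSpace ℝ (Fin d))} {r : ℕ}

lemma abs_integral_sub_le_dtW [IsProbabilityMeasure μ] [IsProbabilityMeasure ν]
    {h : EuclideanSpace ℝ (Fin d) → ℝ} (hh : IsTestFn d r h) :
    |∫ x, h x ∂μ - ∫ x, h x ∂ν| ≤ dtW d r μ ν := by
  refine le_csSup ⟨2, ?_⟩ ⟨h, hh.contDiff, hh.abs_iteratedFDeriv_single_le, rfl⟩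
  rintro _ ⟨g, hg, hg', rfl⟩
  have hg : IsTestFn d r g := ⟨hg, hg'⟩
  linarith [abs_sub (∫ x, g x ∂μ) (∫ x, g x ∂ν), hg.abs_integral_le μ, hg.abs_integral_le ν]

lemma dtW_nonneg [IsProbabilityMeasure μ] [IsProbabilityMeasure ν] : 0 ≤ dtW d r μ ν := by
  simpa using abs_integral_sub_le_dtW (μ := μ) (ν := ν) (IsTestFn.zero (r := r))

lemma dtW_le_of_forall {a : ℝ} (ha : 0 ≤ a)
    (H : ∀ h, IsTestFn d r h → |∫ x, h x ∂μ - ∫ x, h x ∂ν| ≤ a) : dtW d r μ ν ≤ a := by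
  refine Real.sSup_le ?_ ha
  rintro _ ⟨h, hh, hh', rfl⟩
  exact H h ⟨hh, hh'⟩

lemma dtW_antitone [IsProbabilityMeasure μ] [IsProbabilityMeasure ν] {m n : ℕ} (hmn : m ≤ n) :
    dtW d n μ ν ≤ dtW d m μ ν :=
  dtW_le_of_forall dtW_nonneg fun _ hh => abs_integral_sub_le_dtW (hh.mono hmn)

end SmoothWasserstein

section MollifiedTestFn

variable {d k : ℕ} {φ : ContDiffBump (0 : EuclideanSpace ℝ (Fin d))} {ε : ℝ}
  {h : EuclideanSpace ℝ (Fin d) → ℝ}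

namespace IsTestFn

lemma iteratedFDeriv_mollify (hh : IsTestFn d k h) (ε : ℝ) {ℓ : ℕ} (hℓ : ℓ ≤ k) :
    iteratedFDeriv ℝ ℓ (mollify φ ε h) = mollify φ ε (iteratedFDeriv ℝ ℓ h) :=
  _root_.iteratedFDeriv_mollify hh.contDiff (fun _ hj => ⟨_, hh.norm_iteratedFDeriv_le hj⟩) ε
    hℓ

lemma abs_iteratedFDeriv_mollify_single_le (hh : IsTestFn d k h) (ε : ℝ) {ℓ : ℕ}
    (hℓ : ℓ ≤ k) (x : EuclideanSpace ℝ (Fin d)) (m : Fin ℓ → Fin d) :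
    |iteratedFDeriv ℝ ℓ (mollify φ ε h) x (fun i => EuclideanSpace.single (m i) 1)| ≤ 1 := by
  rw [hh.iteratedFDeriv_mollify ε hℓ,
    mollify_apply_apply (hh.contDiff.continuous_iteratedFDeriv (by exact_mod_cast hℓ)),
    ← Real.norm_eq_abs]
  exact norm_mollify_le
    (fun z => (Real.norm_eq_abs _).trans_le (hh.abs_iteratedFDeriv_single_le ℓ hℓ z m)) ε x

lemma abs_iteratedFDeriv_succ_mollify_single_le (hh : IsTestFn d k h) (hε : 0 < ε)
    (x : EuclideanSpace ℝ (Fin d)) (m : Fin (k + 1) → Fin d) :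
    |iteratedFDeriv ℝ (k + 1) (mollify φ ε h) x (fun i => EuclideanSpace.single (m i) 1)|
      ≤ φ.normFDerivIntegral / ε := by
  set F := iteratedFDeriv ℝ k h
  set w : Fin k → EuclideanSpace ℝ (Fin d) := fun i => EuclideanSpace.single (m i.succ) 1
  have hF : Continuous F := hh.contDiff.continuous_iteratedFDeriv le_rfl
  have hw : (fun y => mollify φ ε F y w) = mollify φ ε (fun z => F z w) :=
    funext fun y => mollify_apply_apply hF ε y w
  have hFw : ∀ z, ‖F z w‖ ≤ 1 := fun z =>
    (Real.norm_eq_abs _).trans_le (hh.abs_iteratedFDeriv_single_le k le_rfl z (Fin.tail m))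
  rw [iteratedFDeriv_succ_apply_left, hh.iteratedFDeriv_mollify ε le_rfl,
    ← fderiv_continuousMultilinear_apply_const_apply
      ((contDiff_mollify hF hε.ne' (n := 1)).differentiable one_ne_zero x)]
  change |fderiv ℝ (fun y => mollify φ ε F y w) x _| ≤ _
  rw [hw, ← Real.norm_eq_abs]
  calc _ ≤ ‖fderiv ℝ (mollify φ ε fun z => F z w) x‖ * ‖EuclideanSpace.single (m 0) (1 : ℝ)‖ :=
        le_opNorm _ _
    _ = ‖fderiv ℝ (mollify φ ε fun z => F z w) x‖ := by simp
    _ ≤ φ.normFDerivIntegral * 1 / ε :=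
        norm_fderiv_mollify_le (f := fun z => F z w) (by fun_prop) hFw hε x
    _ = φ.normFDerivIntegral / ε := by rw [mul_one]

lemma smul_mollify (hh : IsTestFn d k h) (hε : 0 < ε) :
    IsTestFn d (k + 1) ((1 + φ.normFDerivIntegral / ε)⁻¹ • mollify φ ε h) := by
  set A := 1 + φ.normFDerivIntegral / ε
  have hCA : φ.normFDerivIntegral / ε ≤ A := le_add_of_nonneg_left zero_le_one
  have hA : 1 ≤ A := le_add_of_nonneg_right (div_nonneg φ.normFDerivIntegral_nonneg hε.le)
  have hsmooth : ContDiff ℝ (k + 1 : ℕ) (mollify φ ε h) :=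
    contDiff_mollify hh.contDiff.continuous hε.ne'
  refine ⟨hsmooth.const_smul A⁻¹, fun ℓ hℓ x m => ?_⟩
  have hbound : |iteratedFDeriv ℝ ℓ (mollify φ ε h) x
      (fun i => EuclideanSpace.single (m i) 1)| ≤ A := by
    rcases Nat.lt_or_eq_of_le hℓ with hℓ | rfl
    · exact (hh.abs_iteratedFDeriv_mollify_single_le ε (Nat.lt_succ_iff.1 hℓ) x m).trans hA
    · exact (hh.abs_iteratedFDeriv_succ_mollify_single_le hε x m).trans hCA
  rw [iteratedFDeriv_const_smul_apply ((hsmooth.of_le (by exact_mod_cast hℓ)).contDiffAt),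
    _root_.smul_apply, smul_eq_mul, abs_mul,
    abs_of_pos (inv_pos.2 (zero_lt_one.trans_le hA))]
  exact inv_mul_le_one_of_le₀ hbound (zero_le_one.trans hA)

end IsTestFn

end MollifiedTestFn

section Interpolation

variable {d k : ℕ} {μ ν : Measure (EuclideanSpace ℝ (Fin d))}
  [IsProbabilityMeasure μ] [IsProbabilityMeasure ν]

lemma dtW_le_add_mul_dtW_succ (φ : ContDiffBump (0 : EuclideanSpace ℝ (Fin d))) (hk : 1 ≤ k)
    {ε : ℝ} (hε : 0 < ε) :
    dtW d k μ ν
      ≤ 2 * (d * φ.rOut * ε) + (1 + φ.normFDerivIntegral / ε) * dtW d (k + 1) μ ν := by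
  set A := 1 + φ.normFDerivIntegral / ε
  have hA : 0 < A := add_pos_of_pos_of_nonneg one_pos
    (div_nonneg φ.normFDerivIntegral_nonneg hε.le)
  have hnonneg : 0 ≤ 2 * (d * φ.rOut * ε) := by
    have := φ.rOut_pos
    positivity
  refine dtW_le_of_forall (add_nonneg hnonneg (mul_nonneg hA.le dtW_nonneg)) fun h hh => ?_
  set g := mollify φ ε h
  have hg_cont : Continuous g :=
    (contDiff_mollify hh.contDiff.continuous hε.ne' (n := 0)).continuous
  have hg_le : ∀ x, ‖g x‖ ≤ 1 :=
    norm_mollify_le (fun z => (Real.norm_eq_abs _).trans_le (hh.abs_le_one z)) ε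
  have hgh : ∀ (ρ : Measure (EuclideanSpace ℝ (Fin d))) [IsProbabilityMeasure ρ],
      |∫ x, g x ∂ρ - ∫ x, h x ∂ρ| ≤ d * φ.rOut * ε := fun ρ _ => by
    rw [← integral_sub (.of_bound hg_cont.aestronglyMeasurable 1 (.of_forall hg_le))
      (hh.integrable ρ), ← Real.norm_eq_abs]
    simpa using norm_integral_le_of_norm_le_const (μ := ρ)
      (.of_forall fun x => norm_mollify_sub_le (hh.lipschitzWith hk) hε x)
  have hgg : |∫ x, g x ∂μ - ∫ x, g x ∂ν| ≤ A * dtW d (k + 1) μ ν := by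
    have := abs_integral_sub_le_dtW (μ := μ) (ν := ν) (hh.smul_mollify (φ := φ) hε)
    rwa [Pi.smul_def, integral_smul, integral_smul, ← smul_sub, smul_eq_mul, abs_mul, abs_inv,
      abs_of_pos hA, inv_mul_le_iff₀ hA] at this
  have h1 := hgh μ
  have h2 := hgh ν
  rw [abs_le] at h1 h2 hgg ⊢
  constructor <;> linarith

end Interpolation

lemma exists_dtW_le_mul_sqrt_dtW_succ (d : ℕ) :
    ∃ C : ℝ, 1 ≤ C ∧ ∀ k : ℕ, 1 ≤ k → ∀ (μ ν : Measure (EuclideanSpace ℝ (Fin d)))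
      [IsProbabilityMeasure μ] [IsProbabilityMeasure ν], dtW d (k + 1) μ ν < 1 →
        dtW d k μ ν ≤ C * √(dtW d (k + 1) μ ν) := by
  let φ : ContDiffBump (0 : EuclideanSpace ℝ (Fin d)) := ⟨1 / 2, 1, by norm_num, by norm_num⟩
  have hCφ := φ.normFDerivIntegral_nonneg
  refine ⟨2 * d + φ.normFDerivIntegral + 1, by linarith [(d.cast_nonneg : (0 : ℝ) ≤ d)],
    fun k hk μ ν _ _ ht => ?_⟩
  set t := dtW d (k + 1) μ ν
  -- the optimal bandwidth `ε = √t` is reached as a limit, so that `t = 0` needs no special case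
  have hbound : ∀ ε ∈ Set.Ioo (√t) 1,
      dtW d k μ ν ≤ (2 * d + φ.normFDerivIntegral + 1) * ε := by
    rintro ε ⟨htε, hε1⟩
    have hε : 0 < ε := (Real.sqrt_nonneg t).trans_lt htε
    have htε2 : t ≤ ε ^ 2 := ((Real.sqrt_lt' hε).1 htε).le
    calc dtW d k μ ν ≤ 2 * (d * 1 * ε) + (1 + φ.normFDerivIntegral / ε) * t :=
          dtW_le_add_mul_dtW_succ φ hk hε
      _ ≤ 2 * (d * 1 * ε) + (1 + φ.normFDerivIntegral / ε) * ε ^ 2 := by gcongr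
      _ = (2 * d + φ.normFDerivIntegral) * ε + ε ^ 2 := by field_simp; ring
      _ ≤ (2 * d + φ.normFDerivIntegral + 1) * ε := by nlinarith
  have hsqrt : √t < 1 := (Real.sqrt_lt' one_pos).2 (by simpa using ht)
  exact ge_of_tendsto ((continuous_const_mul _).tendsto (√t) |>.mono_left nhdsWithin_le_nhds)
    (Filter.eventually_of_mem (Ioo_mem_nhdsGT hsqrt) hbound)

lemma le_rpow_half_pow_of_le_sqrt_succ {u : ℕ → ℝ} (hu0 : ∀ j, 0 ≤ u j)
    (hu : ∀ j, u j ≤ √(u (j + 1))) (j : ℕ) : u 0 ≤ u j ^ ((1 / 2 : ℝ) ^ j) := by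
  induction j with
  | zero => simp
  | succ j ih =>
    calc u 0 ≤ u j ^ ((1 / 2 : ℝ) ^ j) := ih
      _ ≤ (u (j + 1) ^ (1 / 2 : ℝ)) ^ ((1 / 2 : ℝ) ^ j) :=
        Real.rpow_le_rpow (hu0 j) ((Real.sqrt_eq_rpow _).subst (hu j)) (by positivity)
      _ = u (j + 1) ^ ((1 / 2 : ℝ) ^ (j + 1)) := by rw [← Real.rpow_mul (hu0 _), pow_succ']

lemma le_sq_mul_rpow_of_le_mul_sqrt_succ {u : ℕ → ℝ} {C : ℝ} (hC : 1 ≤ C)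
    (hu0 : ∀ j, 0 ≤ u j) (hu : ∀ j, u j ≤ C * √(u (j + 1))) (j : ℕ) :
    u 0 ≤ C ^ 2 * u j ^ ((1 / 2 : ℝ) ^ j) := by
  have hC0 : 0 < C := zero_lt_one.trans_le hC
  -- the rescaled sequence `u / C²` satisfies the recursion with constant one
  have hs := le_rpow_half_pow_of_le_sqrt_succ (u := fun j => u j / C ^ 2)
    (fun j => div_nonneg (hu0 j) (sq_nonneg C)) (fun j => by
      rw [Real.sqrt_div' _ (sq_nonneg C), Real.sqrt_sq hC0.le,
        div_le_div_iff₀ (by positivity) hC0]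
      nlinarith [hu j]) j
  calc u 0 = C ^ 2 * (u 0 / C ^ 2) := by field_simp
    _ ≤ C ^ 2 * (u j / C ^ 2) ^ ((1 / 2 : ℝ) ^ j) := by gcongr
    _ ≤ C ^ 2 * u j ^ ((1 / 2 : ℝ) ^ j) := by
      gcongr
      · exact div_nonneg (hu0 j) (sq_nonneg C)
      · exact div_le_self (hu0 j) (one_le_pow₀ hC)

/-- For `r ≥ 2` there are constants `C̃_r, C̄_r > 0`, depending only on `r` and `d`,
such that for any random vectors (laws) `Z`, `Y` in `ℝ^d`: if `d̃_{W_r}(Z,Y) < 1` then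
`d̃_{W_{r-1}}(Z,Y) ≤ C̃_r √(d̃_{W_r}(Z,Y))`, and consequently if `d̃_{W_2}(Z,Y) < 1` then
`d̃_{W_1}(Z,Y) ≤ C̄_r (d̃_{W_r}(Z,Y))^{1/2^{r-1}}`. -/
theorem dtW_interpolation (d r : ℕ) (hr : 2 ≤ r) :
    ∃ Ct : ℝ, 0 < Ct ∧ ∃ Cb : ℝ, 0 < Cb ∧
      ∀ μZ μY : Measure (EuclideanSpace ℝ (Fin d)),
        IsProbabilityMeasure μZ → IsProbabilityMeasure μY →
        (dtW d r μZ μY < 1 →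
          dtW d (r - 1) μZ μY ≤ Ct * Real.sqrt (dtW d r μZ μY)) ∧
        (dtW d 2 μZ μY < 1 →
          dtW d 1 μZ μY ≤ Cb * (dtW d r μZ μY) ^ ((1 : ℝ) / 2 ^ (r - 1))) := by
  obtain ⟨C, hC, hstep⟩ := exists_dtW_le_mul_sqrt_dtW_succ d
  obtain ⟨k, rfl⟩ : ∃ k, r = k + 1 := ⟨r - 1, by omega⟩
  refine ⟨C, by linarith, C ^ 2, by positivity,
    fun μZ μY _ _ => ⟨fun ht => ?_, fun ht2 => ?_⟩⟩
  · exact hstep k (by omega) μZ μY ht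
  · have hchain := le_sq_mul_rpow_of_le_mul_sqrt_succ (u := fun j => dtW d (j + 1) μZ μY) hC
      (fun _ => dtW_nonneg) (fun j => hstep (j + 1) (by omega) μZ μY
        ((dtW_antitone (by omega)).trans_lt ht2)) k
    simpa [one_div_pow] using hchain
end

section
/- Under the assumptions on X above, for all ξ ∈ ℝ^d and t ∈ (0,1), |φ_t(ξ) − 1| ≤ C·t·(‖ξ‖·‖EX‖ + ‖ξ‖ + ‖ξ‖²) for some constant C > 0 independent of ξ and t, where φ_t(ξ) = φ(ξ)/φ(e^{−t}ξ). -/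
open MeasureTheory
open scoped RealInnerProductSpace

noncomputable def charFn {d : ℕ} (μ : Measure (EuclideanSpace ℝ (Fin d)))
    (ξ : EuclideanSpace ℝ (Fin d)) : ℂ :=
  ∫ x, Complex.exp ((⟪ξ, x⟫ : ℂ) * Complex.I) ∂μ

/-- The setup of the paper: a non-degenerate self-decomposable law `μ` on `ℝ^d`, without
Gaussian component, with finite first moment, whose Lévy measure `ν` has polar decomposition
`ν(B) = ∫_{S^{d-1}} λ(dx) ∫_0^∞ 1_B(r x) k_x(r) dr/r` with `k_x(r)` nonincreasing in `r` and
locally bounded, uniformly in `x`. -/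
structure SelfDecSetup (d : ℕ) where
  μ : Measure (EuclideanSpace ℝ (Fin d))
  prob : IsProbabilityMeasure μ
  ν : Measure (EuclideanSpace ℝ (Fin d))
  sigmaFin : SigmaFinite ν
  lam : Measure (Metric.sphere (0 : EuclideanSpace ℝ (Fin d)) 1)
  lamProb : IsProbabilityMeasure lam
  k : Metric.sphere (0 : EuclideanSpace ℝ (Fin d)) 1 → ℝ → ℝ
  k_nonneg : ∀ x r, 0 < r → 0 ≤ k x r
  k_antitone : ∀ x r s, 0 < r → r ≤ s → k x s ≤ k x r
  /-- `ν` is a Lévy measure. -/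
  levy_zero : ν {0} = 0
  levy_fin : ∫⁻ u, ENNReal.ofReal (min 1 (‖u‖ ^ 2)) ∂ν < ⊤
  /-- polar decomposition of `ν`. -/
  polar : ∀ B : Set (EuclideanSpace ℝ (Fin d)), MeasurableSet B →
    ν B = ∫⁻ x, (∫⁻ r in Set.Ioi (0 : ℝ),
      ENNReal.ofReal (Set.indicator B (fun _ => k x r / r)
        (r • (x : EuclideanSpace ℝ (Fin d))))) ∂lam
  /-- local boundedness of `k`, uniformly in `x` (condition (3.2) of the paper). -/
  k_loc_bdd : ∀ a b : ℝ, 0 < a → a < b → ∃ M : ℝ, ∀ x, ∀ r ∈ Set.Ioo a b, k x r ≤ M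
  /-- finite first moment. -/
  mom1 : Integrable (fun x => ‖x‖) μ
  /-- Lévy–Khintchine representation with no Gaussian component (finite-mean form). -/
  LK : ∀ ξ, charFn μ ξ = Complex.exp ((⟪ξ, ∫ x, x ∂μ⟫ : ℂ) * Complex.I +
    ∫ u, (Complex.exp ((⟪ξ, u⟫ : ℂ) * Complex.I) - 1 - (⟪ξ, u⟫ : ℂ) * Complex.I) ∂ν)
  /-- self-decomposability. -/
  selfdec : ∀ γ : ℝ, γ ∈ Set.Ioo (0 : ℝ) 1 →
    ∃ ρ : Measure (EuclideanSpace ℝ (Fin d)), IsProbabilityMeasure ρ ∧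
      ∀ ξ, charFn μ ξ = charFn μ (γ • ξ) * charFn ρ ξ
  /-- non-degeneracy: the law is not supported on an affine hyperplane. -/
  nondeg : ∀ v : EuclideanSpace ℝ (Fin d), v ≠ 0 → ∀ c : ℝ, μ {x | ⟪v, x⟫ = c} < 1

/-!
With `g x = exp (x I) - 1 - x I`, the Lévy–Khintchine exponent
`ψ ξ = i⟪ξ, E X⟫ + ∫ g ⟪ξ, u⟫ dν(u)` satisfies `φ_t ξ = exp (ψ ξ - ψ (e^{-t} ξ))`, and since
`‖φ_t ξ‖ ≤ 1` this gives `‖φ_t ξ - 1‖ ≤ 2 ‖ψ ξ - ψ (e^{-t} ξ)‖`. The mean value theorem with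
`‖g' s‖ ≤ min 2 |s|` gives `‖g x - g (γ x)‖ ≤ 2 (1 - γ) min (x²) |x|`, which bounds the jump part
of `ψ ξ - ψ (γ ξ)` by `2 (1 - γ) (‖ξ‖² ∫_{‖u‖ ≤ 1} ‖u‖² dν + q ξ)` with
`q ξ = ∫_{‖u‖ > 1} |⟪ξ, u⟫| dν`; finally `1 - e^{-t} ≤ t`.

No integrability of `‖u‖` at infinity is needed: `q` is subadditive and absolutely homogeneous, so
it is finite exactly on a linear subspace, where it is a seminorm and therefore, in finite
dimension, at most `K ‖ξ‖`. Off that subspace neither `g ⟪ξ, ·⟫` nor `g ⟪e^{-t} ξ, ·⟫` is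
integrable, so both Bochner integrals are `0` and only the drift term is left.
-/

open Complex MeasureTheory Metric
open scoped ENNReal

noncomputable def lkKernel (x : ℝ) : ℂ := exp (x * I) - 1 - x * I

theorem norm_exp_ofReal_mul_I_sub_one_le_min (x : ℝ) : ‖exp (x * I) - 1‖ ≤ min 2 |x| := by
  refine le_min ?_ ?_
  · calc ‖exp (x * I) - 1‖ ≤ ‖exp (x * I)‖ + ‖(1 : ℂ)‖ := norm_sub_le _ _
      _ = 2 := by rw [norm_exp_ofReal_mul_I, norm_one]; norm_num
  · simpa [mul_comm] using Real.norm_exp_I_mul_ofReal_sub_one_le (x := x)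

theorem hasDerivAt_lkKernel (x : ℝ) : HasDerivAt lkKernel (I * (exp (x * I) - 1)) x := by
  have hlin : HasDerivAt (fun s : ℝ => (s : ℂ) * I) I x := by
    simpa using (hasDerivAt_id x).ofReal_comp.mul_const I
  exact ((hlin.cexp.sub_const 1).sub hlin).congr_deriv (by ring)

theorem norm_lkKernel_sub_lkKernel_mul_le (x : ℝ) {γ : ℝ} (hγ₀ : 0 ≤ γ) (hγ₁ : γ ≤ 1) :
    ‖lkKernel x - lkKernel (γ * x)‖ ≤ 2 * (1 - γ) * min (x ^ 2) |x| := by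
  have hmem : ∀ {c : ℝ}, |c| ≤ 1 → c * x ∈ closedBall (0 : ℝ) |x| := fun hc => by
    simpa [abs_mul] using mul_le_of_le_one_left (abs_nonneg x) hc
  have hderiv : ∀ s ∈ closedBall (0 : ℝ) |x|, ‖I * (exp (s * I) - 1)‖ ≤ min 2 |x| := by
    intro s hs
    rw [norm_mul, norm_I, one_mul]
    exact (norm_exp_ofReal_mul_I_sub_one_le_min s).trans
      (min_le_min_left _ (by simpa using hs))
  have hmvt := (convex_closedBall (0 : ℝ) |x|).norm_image_sub_le_of_norm_hasDerivWithin_le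
    (fun s _ => (hasDerivAt_lkKernel s).hasDerivWithinAt) hderiv
    (hmem (by rw [abs_of_nonneg hγ₀]; exact hγ₁)) (hmem (c := 1) (by simp))
  rw [one_mul, Real.norm_eq_abs, show x - γ * x = (1 - γ) * x by ring, abs_mul,
    abs_of_nonneg (by linarith : 0 ≤ 1 - γ)] at hmvt
  have hmin : min 2 |x| * |x| ≤ 2 * min (x ^ 2) |x| := by
    rw [min_mul_of_nonneg _ _ (abs_nonneg x), ← sq_abs x, mul_min_of_nonneg _ _ zero_le_two,
      min_comm, ← pow_two]
    exact min_le_min_right _ (by nlinarith [sq_nonneg |x|])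
  calc _ ≤ min 2 |x| * ((1 - γ) * |x|) := hmvt
    _ = (1 - γ) * (min 2 |x| * |x|) := by ring
    _ ≤ (1 - γ) * (2 * min (x ^ 2) |x|) := by gcongr
    _ = 2 * (1 - γ) * min (x ^ 2) |x| := by ring

theorem norm_lkKernel_le (x : ℝ) : ‖lkKernel x‖ ≤ 2 * min (x ^ 2) |x| := by
  simpa [lkKernel] using norm_lkKernel_sub_lkKernel_mul_le x le_rfl zero_le_one

theorem abs_le_norm_lkKernel_add_one (x : ℝ) : |x| ≤ ‖lkKernel x‖ + 1 := by
  have him : (lkKernel x).im = Real.sin x - x := by simp [lkKernel, exp_ofReal_mul_I_im]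
  calc |x| ≤ |Real.sin x - x| + |Real.sin x| := by
        simpa [abs_sub_comm] using abs_sub_le x (Real.sin x) 0
    _ ≤ ‖lkKernel x‖ + 1 := by
      gcongr
      · rw [← him]; exact abs_im_le_norm _
      · exact Real.abs_sin_le_one x

theorem exists_toReal_le_mul_norm_of_subadditive {E : Type*} [NormedAddCommGroup E]
    [NormedSpace ℝ E] [FiniteDimensional ℝ E] {p : E → ℝ≥0∞}
    (hadd : ∀ x y, p (x + y) ≤ p x + p y)
    (hsmul : ∀ (c : ℝ) x, p (c • x) = ENNReal.ofReal |c| * p x) :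
    ∃ K, 0 < K ∧ ∀ x, p x < ⊤ → (p x).toReal ≤ K * ‖x‖ := by
  let G : Submodule ℝ E :=
    { carrier := {x | p x < ⊤}
      add_mem' := fun hx hy => (hadd _ _).trans_lt (ENNReal.add_lt_top.2 ⟨hx, hy⟩)
      zero_mem' := by
        change p 0 < ⊤
        rw [← zero_smul ℝ (0 : E), hsmul]
        simp
      smul_mem' := fun c x hx => by
        simpa [hsmul] using ENNReal.mul_lt_top ENNReal.ofReal_lt_top hx }
  let s : Seminorm ℝ G := Seminorm.of (fun x => (p x).toReal)
    (fun x y => by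
      rw [← ENNReal.toReal_add x.2.ne y.2.ne]
      exact ENNReal.toReal_mono (ENNReal.add_lt_top.2 ⟨x.2, y.2⟩).ne (hadd _ _))
    (fun c x => by simp [hsmul, ENNReal.toReal_mul])
  obtain ⟨K, hK, hbound⟩ := s.bound_of_continuous_normedSpace
    (continuousOn_univ.1 (s.convexOn.continuousOn isOpen_univ))
  exact ⟨K, hK, fun x hx => hbound ⟨x, hx⟩⟩

section LevyMeasure

variable {E : Type*} [SeminormedAddCommGroup E] [MeasurableSpace E] [OpensMeasurableSpace E]
  {ν : Measure E}

theorem measure_compl_closedBall_one_lt_top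
    (hν : ∫⁻ u, ENNReal.ofReal (min 1 (‖u‖ ^ 2)) ∂ν < ⊤) : ν (closedBall 0 1)ᶜ < ⊤ := by
  refine lt_of_le_of_lt ?_ hν
  calc ν (closedBall 0 1)ᶜ ≤ ν {u | 1 ≤ ENNReal.ofReal (min 1 (‖u‖ ^ 2))} := by
        refine measure_mono fun u hu => ?_
        have : 1 < ‖u‖ := by simpa using hu
        simp only [Set.mem_ofPred_eq, min_eq_left (one_le_pow₀ this.le), ENNReal.ofReal_one,
          le_refl]
    _ ≤ ∫⁻ u, ENNReal.ofReal (min 1 (‖u‖ ^ 2)) ∂ν := by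
      simpa only [one_mul] using mul_meas_ge_le_lintegral₀
        (μ := ν) (f := fun u => ENNReal.ofReal (min 1 (‖u‖ ^ 2))) (by fun_prop) 1

theorem setLIntegral_closedBall_one_sq_norm_lt_top
    (hν : ∫⁻ u, ENNReal.ofReal (min 1 (‖u‖ ^ 2)) ∂ν < ⊤) :
    ∫⁻ u in closedBall 0 1, ENNReal.ofReal (‖u‖ ^ 2) ∂ν < ⊤ := by
  refine lt_of_le_of_lt ?_ hν
  calc ∫⁻ u in closedBall 0 1, ENNReal.ofReal (‖u‖ ^ 2) ∂ν
      ≤ ∫⁻ u in closedBall 0 1, ENNReal.ofReal (min 1 (‖u‖ ^ 2)) ∂ν := by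
        refine setLIntegral_mono' measurableSet_closedBall fun u hu => ?_
        have : ‖u‖ ≤ 1 := by simpa using hu
        rw [min_eq_right (pow_le_one₀ (norm_nonneg u) this)]
    _ ≤ _ := setLIntegral_le_lintegral _ _

end LevyMeasure

section LargeJumps

variable {E : Type*} [NormedAddCommGroup E] [InnerProductSpace ℝ E] [MeasurableSpace E]
  {ν : Measure E}

noncomputable def largeJumpMoment (ν : Measure E) (ξ : E) : ℝ≥0∞ :=
  ∫⁻ u in (closedBall 0 1)ᶜ, ENNReal.ofReal |⟪ξ, u⟫| ∂ν

theorem largeJumpMoment_smul (ν : Measure E) (c : ℝ) (ξ : E) :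
    largeJumpMoment ν (c • ξ) = ENNReal.ofReal |c| * largeJumpMoment ν ξ := by
  simp only [largeJumpMoment, real_inner_smul_left, abs_mul,
    ENNReal.ofReal_mul (abs_nonneg c)]
  exact lintegral_const_mul' _ _ ENNReal.ofReal_ne_top

variable [OpensMeasurableSpace E]

theorem largeJumpMoment_add_le (ν : Measure E) (ξ η : E) :
    largeJumpMoment ν (ξ + η) ≤ largeJumpMoment ν ξ + largeJumpMoment ν η := by
  rw [largeJumpMoment, largeJumpMoment, largeJumpMoment, ← lintegral_add_left (by fun_prop)]
  refine lintegral_mono fun u => ?_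
  rw [← ENNReal.ofReal_add (abs_nonneg _) (abs_nonneg _), inner_add_left]
  exact ENNReal.ofReal_le_ofReal (abs_add_le _ _)

theorem lintegral_min_sq_abs_inner_le (ν : Measure E) (ξ : E) :
    ∫⁻ u, ENNReal.ofReal (min (⟪ξ, u⟫ ^ 2) |⟪ξ, u⟫|) ∂ν ≤
      ENNReal.ofReal (‖ξ‖ ^ 2) * ∫⁻ u in closedBall 0 1, ENNReal.ofReal (‖u‖ ^ 2) ∂ν +
        largeJumpMoment ν ξ := by
  rw [← lintegral_add_compl _ measurableSet_closedBall, largeJumpMoment,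
    ← lintegral_const_mul' _ _ ENNReal.ofReal_ne_top]
  gcongr with u u
  · rw [← ENNReal.ofReal_mul (sq_nonneg _), ← mul_pow]
    refine ENNReal.ofReal_le_ofReal ((min_le_left _ _).trans ?_)
    rw [← sq_abs]
    gcongr
    exact abs_real_inner_le_norm ξ u
  · exact min_le_right _ _

theorem lintegral_min_sq_abs_inner_lt_top
    (hν : ∫⁻ u, ENNReal.ofReal (min 1 (‖u‖ ^ 2)) ∂ν < ⊤) {ξ : E}
    (hξ : largeJumpMoment ν ξ < ⊤) :
    ∫⁻ u, ENNReal.ofReal (min (⟪ξ, u⟫ ^ 2) |⟪ξ, u⟫|) ∂ν < ⊤ :=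
  (lintegral_min_sq_abs_inner_le ν ξ).trans_lt <| ENNReal.add_lt_top.2
    ⟨ENNReal.mul_lt_top ENNReal.ofReal_lt_top (setLIntegral_closedBall_one_sq_norm_lt_top hν), hξ⟩

theorem integrable_lkKernel_inner_iff
    (hν : ∫⁻ u, ENNReal.ofReal (min 1 (‖u‖ ^ 2)) ∂ν < ⊤) (ξ : E) :
    Integrable (fun u => lkKernel ⟪ξ, u⟫) ν ↔ largeJumpMoment ν ξ < ⊤ := by
  have hcont : Continuous fun u => lkKernel ⟪ξ, u⟫ := by unfold lkKernel; fun_prop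
  rw [Integrable, and_iff_right hcont.aestronglyMeasurable, hasFiniteIntegral_iff_norm]
  constructor
  · intro hint
    calc largeJumpMoment ν ξ
        ≤ ∫⁻ u in (closedBall 0 1)ᶜ, (ENNReal.ofReal ‖lkKernel ⟪ξ, u⟫‖ + 1) ∂ν := by
          refine lintegral_mono fun u => ?_
          rw [← ENNReal.ofReal_one, ← ENNReal.ofReal_add (norm_nonneg _) zero_le_one]
          exact ENNReal.ofReal_le_ofReal (abs_le_norm_lkKernel_add_one _)
      _ ≤ ∫⁻ u, ENNReal.ofReal ‖lkKernel ⟪ξ, u⟫‖ ∂ν + ν (closedBall 0 1)ᶜ := by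
          rw [lintegral_add_right _ measurable_const, setLIntegral_one]
          gcongr
          exact Measure.restrict_le_self
      _ < ⊤ := ENNReal.add_lt_top.2 ⟨hint, measure_compl_closedBall_one_lt_top hν⟩
  · intro hξ
    calc ∫⁻ u, ENNReal.ofReal ‖lkKernel ⟪ξ, u⟫‖ ∂ν
        ≤ ∫⁻ u, ENNReal.ofReal 2 * ENNReal.ofReal (min (⟪ξ, u⟫ ^ 2) |⟪ξ, u⟫|) ∂ν := by
          refine lintegral_mono fun u => ?_
          rw [← ENNReal.ofReal_mul zero_le_two]
          exact ENNReal.ofReal_le_ofReal (norm_lkKernel_le _)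
      _ < ⊤ := by
          rw [lintegral_const_mul' _ _ ENNReal.ofReal_ne_top]
          exact ENNReal.mul_lt_top ENNReal.ofReal_lt_top (lintegral_min_sq_abs_inner_lt_top hν hξ)

theorem norm_integral_lkKernel_inner_sub_le
    (hν : ∫⁻ u, ENNReal.ofReal (min 1 (‖u‖ ^ 2)) ∂ν < ⊤) {ξ : E}
    (hξ : largeJumpMoment ν ξ < ⊤) {γ : ℝ} (hγ₀ : 0 ≤ γ) (hγ₁ : γ ≤ 1) :
    ‖∫ u, lkKernel ⟪ξ, u⟫ ∂ν - ∫ u, lkKernel ⟪γ • ξ, u⟫ ∂ν‖ ≤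
      2 * (1 - γ) * (‖ξ‖ ^ 2 * (∫⁻ u in closedBall 0 1, ENNReal.ofReal (‖u‖ ^ 2) ∂ν).toReal +
        (largeJumpMoment ν ξ).toReal) := by
  have hγξ : largeJumpMoment ν (γ • ξ) < ⊤ := by
    rw [largeJumpMoment_smul]
    exact ENNReal.mul_lt_top ENNReal.ofReal_lt_top hξ
  have hδ : 0 ≤ 2 * (1 - γ) := by linarith
  have hpointwise : ∀ u, ENNReal.ofReal ‖lkKernel ⟪ξ, u⟫ - lkKernel ⟪γ • ξ, u⟫‖ ≤
      ENNReal.ofReal (2 * (1 - γ)) * ENNReal.ofReal (min (⟪ξ, u⟫ ^ 2) |⟪ξ, u⟫|) := by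
    intro u
    rw [← ENNReal.ofReal_mul hδ, real_inner_smul_left]
    exact ENNReal.ofReal_le_ofReal (norm_lkKernel_sub_lkKernel_mul_le _ hγ₀ hγ₁)
  have hmin := lintegral_min_sq_abs_inner_lt_top hν hξ
  rw [← integral_sub ((integrable_lkKernel_inner_iff hν ξ).2 hξ)
    ((integrable_lkKernel_inner_iff hν _).2 hγξ)]
  calc _ ≤ (∫⁻ u, ENNReal.ofReal ‖lkKernel ⟪ξ, u⟫ - lkKernel ⟪γ • ξ, u⟫‖ ∂ν).toReal :=
        norm_integral_le_lintegral_norm _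
    _ ≤ (ENNReal.ofReal (2 * (1 - γ)) *
          ∫⁻ u, ENNReal.ofReal (min (⟪ξ, u⟫ ^ 2) |⟪ξ, u⟫|) ∂ν).toReal := by
      rw [← lintegral_const_mul' _ _ ENNReal.ofReal_ne_top]
      refine ENNReal.toReal_mono ?_ (lintegral_mono hpointwise)
      rw [lintegral_const_mul' _ _ ENNReal.ofReal_ne_top]
      exact ENNReal.mul_ne_top ENNReal.ofReal_ne_top hmin.ne
    _ ≤ _ := by
      rw [ENNReal.toReal_mul, ENNReal.toReal_ofReal hδ]
      gcongr
      refine (ENNReal.toReal_mono ?_ (lintegral_min_sq_abs_inner_le ν ξ)).trans_eq ?_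
      · exact ENNReal.add_ne_top.2 ⟨ENNReal.mul_ne_top ENNReal.ofReal_ne_top
          (setLIntegral_closedBall_one_sq_norm_lt_top hν).ne, hξ.ne⟩
      · rw [ENNReal.toReal_add (ENNReal.mul_ne_top ENNReal.ofReal_ne_top
          (setLIntegral_closedBall_one_sq_norm_lt_top hν).ne) hξ.ne, ENNReal.toReal_mul,
          ENNReal.toReal_ofReal (sq_nonneg _)]

theorem exists_norm_integral_lkKernel_inner_sub_le [FiniteDimensional ℝ E]
    (hν : ∫⁻ u, ENNReal.ofReal (min 1 (‖u‖ ^ 2)) ∂ν < ⊤) :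
    ∃ C, 0 < C ∧ ∀ ξ : E, ∀ γ ∈ Set.Ioc (0 : ℝ) 1,
      ‖∫ u, lkKernel ⟪ξ, u⟫ ∂ν - ∫ u, lkKernel ⟪γ • ξ, u⟫ ∂ν‖ ≤
        C * (1 - γ) * (‖ξ‖ ^ 2 + ‖ξ‖) := by
  obtain ⟨K, hK, hqK⟩ := exists_toReal_le_mul_norm_of_subadditive
    (largeJumpMoment_add_le ν) (largeJumpMoment_smul ν)
  set B := (∫⁻ u in closedBall 0 1, ENNReal.ofReal (‖u‖ ^ 2) ∂ν).toReal
  have hB : 0 ≤ B := ENNReal.toReal_nonneg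
  refine ⟨2 * (B + K), by positivity, fun ξ γ ⟨hγ₀, hγ₁⟩ => ?_⟩
  by_cases hξ : largeJumpMoment ν ξ < ⊤
  · calc _ ≤ 2 * (1 - γ) * (‖ξ‖ ^ 2 * B + (largeJumpMoment ν ξ).toReal) :=
          norm_integral_lkKernel_inner_sub_le hν hξ hγ₀.le hγ₁
      _ ≤ 2 * (1 - γ) * (‖ξ‖ ^ 2 * B + K * ‖ξ‖) := by gcongr; exact hqK ξ hξ
      _ ≤ 2 * (B + K) * (1 - γ) * (‖ξ‖ ^ 2 + ‖ξ‖) := by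
          have : 0 ≤ (1 - γ) * (B * ‖ξ‖ + K * ‖ξ‖ ^ 2) := by positivity
          nlinarith
  · have hγξ : ¬ largeJumpMoment ν (γ • ξ) < ⊤ := by
      rw [largeJumpMoment_smul, not_lt_top_iff.1 hξ, ENNReal.mul_top (by simpa using hγ₀.ne')]
      exact lt_irrefl _
    rw [integral_undef (mt (integrable_lkKernel_inner_iff hν ξ).1 hξ),
      integral_undef (mt (integrable_lkKernel_inner_iff hν _).1 hγξ), sub_zero, norm_zero]
    positivity

end LargeJumps

noncomputable def lkExponent {E : Type*} [NormedAddCommGroup E] [InnerProductSpace ℝ E]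
    [MeasurableSpace E] (m : E) (ν : Measure E) (ξ : E) : ℂ :=
  (⟪ξ, m⟫ : ℂ) * I + ∫ u, lkKernel ⟪ξ, u⟫ ∂ν

theorem exists_norm_lkExponent_sub_le {E : Type*} [NormedAddCommGroup E] [InnerProductSpace ℝ E]
    [FiniteDimensional ℝ E] [MeasurableSpace E] [OpensMeasurableSpace E] {ν : Measure E}
    (m : E) (hν : ∫⁻ u, ENNReal.ofReal (min 1 (‖u‖ ^ 2)) ∂ν < ⊤) :
    ∃ C, 0 < C ∧ ∀ ξ : E, ∀ γ ∈ Set.Ioc (0 : ℝ) 1,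
      ‖lkExponent m ν ξ - lkExponent m ν (γ • ξ)‖ ≤
        C * (1 - γ) * (‖ξ‖ * ‖m‖ + ‖ξ‖ + ‖ξ‖ ^ 2) := by
  obtain ⟨C, hC, hjumps⟩ := exists_norm_integral_lkKernel_inner_sub_le hν
  refine ⟨1 + C, by positivity, fun ξ γ hγ => ?_⟩
  have hδ : 0 ≤ 1 - γ := by linarith [hγ.2]
  have hdrift : ‖(⟪ξ, m⟫ : ℂ) * I - (⟪γ • ξ, m⟫ : ℂ) * I‖ ≤ (1 - γ) * (‖ξ‖ * ‖m‖) := by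
    rw [real_inner_smul_left, ← sub_mul, norm_mul, norm_I, mul_one, ← ofReal_sub,
      norm_real, Real.norm_eq_abs, ← one_sub_mul, abs_mul, abs_of_nonneg hδ]
    exact mul_le_mul_of_nonneg_left (abs_real_inner_le_norm ξ m) hδ
  calc _ = ‖((⟪ξ, m⟫ : ℂ) * I - (⟪γ • ξ, m⟫ : ℂ) * I) +
        (∫ u, lkKernel ⟪ξ, u⟫ ∂ν - ∫ u, lkKernel ⟪γ • ξ, u⟫ ∂ν)‖ := by
        rw [lkExponent, lkExponent]; ring_nf
    _ ≤ (1 - γ) * (‖ξ‖ * ‖m‖) + C * (1 - γ) * (‖ξ‖ ^ 2 + ‖ξ‖) :=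
        norm_add_le_of_le hdrift (hjumps ξ γ hγ)
    _ ≤ (1 + C) * (1 - γ) * (‖ξ‖ * ‖m‖ + ‖ξ‖ + ‖ξ‖ ^ 2) := by
        have : 0 ≤ C * (1 - γ) * (‖ξ‖ * ‖m‖) + (1 - γ) * (‖ξ‖ + ‖ξ‖ ^ 2) := by positivity
        nlinarith

theorem norm_exp_sub_one_le_two_mul_norm {z : ℂ} (hz : ‖exp z‖ ≤ 1) : ‖exp z - 1‖ ≤ 2 * ‖z‖ := by
  rcases le_total ‖z‖ 1 with hz₁ | hz₁
  · exact norm_exp_sub_one_le hz₁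
  · calc ‖exp z - 1‖ ≤ ‖exp z‖ + ‖(1 : ℂ)‖ := norm_sub_le _ _
      _ ≤ 2 * ‖z‖ := by rw [norm_one]; linarith

theorem norm_charFn_le_one {d : ℕ} (μ : Measure (EuclideanSpace ℝ (Fin d)))
    [IsProbabilityMeasure μ] (ξ : EuclideanSpace ℝ (Fin d)) : ‖charFn μ ξ‖ ≤ 1 := by
  simpa [charFn] using norm_integral_le_of_norm_le_const (μ := μ)
    (ae_of_all _ fun x => (norm_exp_ofReal_mul_I ⟪ξ, x⟫).le)

theorem SelfDecSetup.charFn_eq_exp_lkExponent {d : ℕ} (S : SelfDecSetup d)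
    (ξ : EuclideanSpace ℝ (Fin d)) :
    charFn S.μ ξ = exp (lkExponent (∫ x, x ∂S.μ) S.ν ξ) :=
  S.LK ξ

/-- In the self-decomposable setup, with `φ_t(ξ) = φ(ξ)/φ(e^{-t}ξ)` the
characteristic function of `X_t`, there is `C > 0` independent of `ξ` and `t` such that
`|φ_t(ξ) - 1| ≤ C t (‖ξ‖‖E X‖ + ‖ξ‖ + ‖ξ‖²)` for all `ξ ∈ ℝ^d` and `t ∈ (0,1)`. -/
theorem charFn_Xt_near_one (d : ℕ) (S : SelfDecSetup d)
    (μt : ℝ → Measure (EuclideanSpace ℝ (Fin d)))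
    (hprob : ∀ t : ℝ, 0 < t → IsProbabilityMeasure (μt t))
    (hchar : ∀ t : ℝ, 0 < t →
      ∀ ξ, charFn S.μ ξ = charFn S.μ (Real.exp (-t) • ξ) * charFn (μt t) ξ) :
    ∃ C : ℝ, 0 < C ∧ ∀ ξ : EuclideanSpace ℝ (Fin d), ∀ t ∈ Set.Ioo (0 : ℝ) 1,
      ‖charFn (μt t) ξ - 1‖ ≤
        C * t * (‖ξ‖ * ‖∫ x, x ∂S.μ‖ + ‖ξ‖ + ‖ξ‖ ^ 2) := by
  set ψ := lkExponent (∫ x, x ∂S.μ) S.ν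
  obtain ⟨C, hC, hψ⟩ := exists_norm_lkExponent_sub_le (∫ x, x ∂S.μ) S.levy_fin
  refine ⟨2 * C, by positivity, fun ξ t ⟨ht₀, ht₁⟩ => ?_⟩
  have hγ : Real.exp (-t) ∈ Set.Ioc (0 : ℝ) 1 :=
    ⟨Real.exp_pos _, Real.exp_le_one_iff.2 (by linarith)⟩
  have hγt : 1 - Real.exp (-t) ≤ t := by linarith [Real.add_one_le_exp (-t)]
  have hφt : charFn (μt t) ξ = exp (ψ ξ - ψ (Real.exp (-t) • ξ)) := by
    rw [exp_sub, eq_div_iff (exp_ne_zero _), ← S.charFn_eq_exp_lkExponent,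
      ← S.charFn_eq_exp_lkExponent, hchar t ht₀ ξ, mul_comm]
  have : IsProbabilityMeasure (μt t) := hprob t ht₀
  calc ‖charFn (μt t) ξ - 1‖ ≤ 2 * ‖ψ ξ - ψ (Real.exp (-t) • ξ)‖ := by
        rw [hφt]
        exact norm_exp_sub_one_le_two_mul_norm (hφt ▸ norm_charFn_le_one _ ξ)
    _ ≤ 2 * C * (1 - Real.exp (-t)) * (‖ξ‖ * ‖∫ x, x ∂S.μ‖ + ‖ξ‖ + ‖ξ‖ ^ 2) := by
        rw [mul_assoc 2 C, mul_assoc 2]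
        gcongr
        exact hψ ξ _ hγ
    _ ≤ 2 * C * t * (‖ξ‖ * ‖∫ x, x ∂S.μ‖ + ‖ξ‖ + ‖ξ‖ ^ 2) := by gcongr
end
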